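/- Let d ≥ 1, σ > d/2, and let ψ : ℝ^d → ℂ be measurable with M := ∫_{ℝ^d} (1+|s|²)^σ |ψ(s)|² ds < ∞. Then ∑_{m ∈ ℤ^d} (∫_{m + [0,1)^d} |ψ(s)|² ds)^{1/2} ≤ C · M^{1/2}, where C = (∑_{m ∈ ℤ^d} sup_{s ∈ m+[0,1)^d} (1+|s|²)^{−σ})^{1/2} is finite. -/

import Mathlib

/-!
Split `ℝ^d` into the unit cubes `Q_m`. On `Q_m` we have `|ψ|² ≤ A_m · (1 + |s|²)^σ |ψ|²`, where
`A_m` is the supremum of `(1 + |s|²)^(-σ)` over `Q_m`; taking square roots and applying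
Cauchy–Schwarz to the series gives the bound, because the integrals of `(1 + |s|²)^σ |ψ|²` over
the cubes sum to `M`.

For the finiteness of `∑ A_m`: two points of a cube are at distance at most `√d`, so by Peetre's
inequality `(1 + |s|²)^(-σ)` varies by a factor at most `(2(1 + d))^σ` on each cube. Hence `A_m` is
bounded by a multiple of `∫_{Q_m} (1 + |s|²)^(-σ)`, and `(1 + |s|²)^(-σ)` is integrable as `2σ > d`.
-/

open MeasureTheory Set

variable {ι : Type*}

def unitCube (m : ι → ℤ) : Set (EuclideanSpace ℝ ι) :=
  {s | ∀ i, (m i : ℝ) ≤ s i ∧ s i < m i + 1}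

lemma unitCube_eq_preimage (m : ι → ℤ) :
    unitCube m = WithLp.ofLp ⁻¹' univ.pi fun i => Ico (m i : ℝ) (m i + 1) := by
  ext s; simp [unitCube]

lemma measurableSet_unitCube [Countable ι] (m : ι → ℤ) : MeasurableSet (unitCube m) := by
  rw [unitCube_eq_preimage]
  exact (MeasurableSet.univ_pi fun _ => measurableSet_Ico).preimage (WithLp.measurable_ofLp 2 _)

lemma volume_unitCube [Fintype ι] (m : ι → ℤ) : volume (unitCube m) = 1 := by
  rw [unitCube_eq_preimage, (PiLp.volume_preserving_ofLp ι).measure_preimage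
    (MeasurableSet.univ_pi fun _ => measurableSet_Ico).nullMeasurableSet, Real.volume_pi_Ico]
  simp

lemma pairwise_disjoint_unitCube : Pairwise (Function.onFun Disjoint (unitCube (ι := ι))) := by
  intro m m' hne
  refine disjoint_left.mpr fun s hs hs' => hne <| funext fun i => ?_
  rw [← Int.floor_eq_iff.mpr (hs i), Int.floor_eq_iff.mpr (hs' i)]

lemma iUnion_unitCube : ⋃ m, unitCube m = (univ : Set (EuclideanSpace ℝ ι)) :=
  eq_univ_of_forall fun s =>
    mem_iUnion.mpr ⟨fun i => ⌊s i⌋, fun i => ⟨Int.floor_le (s i), Int.lt_floor_add_one (s i)⟩⟩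

lemma toLp_intCast_mem_unitCube (m : ι → ℤ) :
    WithLp.toLp 2 (fun i => (m i : ℝ)) ∈ unitCube m := fun i => by simp

lemma hasSum_setIntegral_unitCube [Fintype ι] {E : Type*} [NormedAddCommGroup E] [NormedSpace ℝ E]
    {f : EuclideanSpace ℝ ι → E} (hf : Integrable f) :
    HasSum (fun m => ∫ s in unitCube m, f s) (∫ s, f s) := by
  simpa [iUnion_unitCube] using hasSum_integral_iUnion measurableSet_unitCube
    pairwise_disjoint_unitCube (by rw [iUnion_unitCube]; exact hf.integrableOn)

lemma norm_sub_sq_le_card_of_mem_unitCube [Fintype ι] {m : ι → ℤ} {s t : EuclideanSpace ℝ ι}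
    (hs : s ∈ unitCube m) (ht : t ∈ unitCube m) : ‖t - s‖ ^ 2 ≤ Fintype.card ι := by
  rw [EuclideanSpace.real_norm_sq_eq]
  have h : ∀ i, (t - s) i ^ 2 ≤ 1 := fun i => by
    simp only [PiLp.sub_apply]
    nlinarith [hs i, ht i]
  simpa using Finset.sum_le_sum fun i (_ : i ∈ Finset.univ) => h i

lemma peetre_one_add_norm_sq_le {E : Type*} [SeminormedAddCommGroup E] (s t : E) :
    1 + ‖t‖ ^ 2 ≤ 2 * (1 + ‖t - s‖ ^ 2) * (1 + ‖s‖ ^ 2) := by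
  have h : ‖t‖ ^ 2 ≤ 2 * ‖t - s‖ ^ 2 + 2 * ‖s‖ ^ 2 := by
    nlinarith [norm_le_norm_sub_add t s, norm_nonneg t, sq_nonneg (‖t - s‖ - ‖s‖)]
  nlinarith [mul_nonneg (sq_nonneg ‖t - s‖) (sq_nonneg ‖s‖)]

lemma rpow_neg_one_add_norm_sq_le_of_mem_unitCube [Fintype ι] {σ : ℝ} (hσ : 0 ≤ σ)
    {m : ι → ℤ} {s t : EuclideanSpace ℝ ι} (hs : s ∈ unitCube m) (ht : t ∈ unitCube m) :
    (1 + ‖s‖ ^ 2) ^ (-σ) ≤ (2 * (1 + (Fintype.card ι : ℝ))) ^ σ * (1 + ‖t‖ ^ 2) ^ (-σ) := by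
  have hK : 1 + ‖t‖ ^ 2 ≤ 2 * (1 + (Fintype.card ι : ℝ)) * (1 + ‖s‖ ^ 2) :=
    (peetre_one_add_norm_sq_le s t).trans <| by
      gcongr; exact norm_sub_sq_le_card_of_mem_unitCube hs ht
  rw [Real.rpow_neg (by positivity), Real.rpow_neg (by positivity), ← div_eq_mul_inv,
    inv_le_comm₀ (by positivity) (by positivity), inv_div, div_le_iff₀ (by positivity),
    ← Real.mul_rpow (by positivity) (by positivity)]
  exact Real.rpow_le_rpow (by positivity) (hK.trans_eq (mul_comm _ _)) hσ

lemma bddAbove_rpow_neg_one_add_norm_sq {E : Type*} [SeminormedAddCommGroup E] {σ : ℝ}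
    (hσ : 0 ≤ σ) (S : Set E) : BddAbove ((fun s => (1 + ‖s‖ ^ 2) ^ (-σ)) '' S) :=
  ⟨1, forall_mem_image.mpr fun s _ =>
    Real.rpow_le_one_of_one_le_of_nonpos (by nlinarith [sq_nonneg ‖s‖]) (by linarith)⟩

lemma sSup_rpow_neg_le_mul_setIntegral [Fintype ι] {σ : ℝ} (hσ : 0 ≤ σ)
    (hv : Integrable fun s : EuclideanSpace ℝ ι => (1 + ‖s‖ ^ 2) ^ (-σ)) (m : ι → ℤ) :
    sSup ((fun s : EuclideanSpace ℝ ι => (1 + ‖s‖ ^ 2) ^ (-σ)) '' unitCube m) ≤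
      (2 * (1 + (Fintype.card ι : ℝ))) ^ σ * ∫ t in unitCube m, (1 + ‖t‖ ^ 2) ^ (-σ) := by
  rw [← integral_const_mul]
  simpa [Measure.real, volume_unitCube] using
    setIntegral_ge_of_const_le (measurableSet_unitCube m) (by simp [volume_unitCube])
    (fun t ht => csSup_le ((nonempty_of_mem (toLp_intCast_mem_unitCube m)).image _)
      (forall_mem_image.mpr fun s hs => rpow_neg_one_add_norm_sq_le_of_mem_unitCube hσ hs ht))
    (hv.const_mul _).integrableOn

lemma summable_sSup_rpow_neg_unitCube [Fintype ι] {σ : ℝ} (hσ : (Fintype.card ι : ℝ) / 2 < σ) :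
    Summable fun m : ι → ℤ =>
      sSup ((fun s : EuclideanSpace ℝ ι => (1 + ‖s‖ ^ 2) ^ (-σ)) '' unitCube m) := by
  have hσ0 : 0 ≤ σ := le_trans (by positivity) hσ.le
  have hv : Integrable fun s : EuclideanSpace ℝ ι => (1 + ‖s‖ ^ 2) ^ (-σ) := by
    have := integrable_rpow_neg_one_add_norm_sq (E := EuclideanSpace ℝ ι) (μ := volume)
      (r := 2 * σ) (by rw [finrank_euclideanSpace]; linarith)
    simpa [neg_div] using this
  refine Summable.of_nonneg_of_le (fun m => Real.sSup_nonneg ?_)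
    (sSup_rpow_neg_le_mul_setIntegral hσ0 hv) ((hasSum_setIntegral_unitCube hv).summable.mul_left _)
  exact forall_mem_image.mpr fun s _ => by positivity

lemma setIntegral_norm_sq_le_sSup_mul {E F : Type*} [SeminormedAddCommGroup E] [MeasurableSpace E]
    [Norm F] {μ : Measure E} {S : Set E} (hS : MeasurableSet S) {σ : ℝ} (hσ : 0 ≤ σ) {ψ : E → F}
    (hint : IntegrableOn (fun s => (1 + ‖s‖ ^ 2) ^ σ * ‖ψ s‖ ^ 2) S μ) :
    ∫ s in S, ‖ψ s‖ ^ 2 ∂μ ≤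
      sSup ((fun s => (1 + ‖s‖ ^ 2) ^ (-σ)) '' S) * ∫ s in S, (1 + ‖s‖ ^ 2) ^ σ * ‖ψ s‖ ^ 2 ∂μ := by
  rw [← integral_const_mul]
  refine integral_mono_of_nonneg (ae_of_all _ fun s => by positivity) (hint.const_mul _)
    (ae_restrict_of_forall_mem hS fun s hs => ?_)
  have hpos : 0 < 1 + ‖s‖ ^ 2 := by positivity
  calc ‖ψ s‖ ^ 2 = (1 + ‖s‖ ^ 2) ^ (-σ) * ((1 + ‖s‖ ^ 2) ^ σ * ‖ψ s‖ ^ 2) := by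
        rw [← mul_assoc, ← Real.rpow_add hpos, neg_add_cancel, Real.rpow_zero, one_mul]
    _ ≤ _ := mul_le_mul_of_nonneg_right
      (le_csSup (bddAbove_rpow_neg_one_add_norm_sq hσ S) (mem_image_of_mem _ hs)) (by positivity)

lemma summable_and_tsum_sqrt_le_of_le_mul {ι : Type*} {a b c : ι → ℝ} (ha : ∀ i, 0 ≤ a i)
    (hb : ∀ i, 0 ≤ b i) (has : Summable a) (hbs : Summable b) (hc : ∀ i, c i ≤ a i * b i) :
    Summable (fun i => √(c i)) ∧ ∑' i, √(c i) ≤ √(∑' i, a i) * √(∑' i, b i) := by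
  have hsq : ∀ {x : ℝ}, 0 ≤ x → √x ^ (2 : ℝ) = x := fun hx => by
    rw [Real.rpow_two, Real.sq_sqrt hx]
  obtain ⟨hsum, hle⟩ := Real.summable_and_inner_le_Lp_mul_Lq_tsum_of_nonneg
    Real.HolderConjugate.two_two (fun i => Real.sqrt_nonneg (a i)) (fun i => Real.sqrt_nonneg (b i))
    (by simpa only [hsq (ha _)] using has) (by simpa only [hsq (hb _)] using hbs)
  simp only [hsq (ha _), hsq (hb _), ← Real.sqrt_eq_rpow] at hle
  have hcab : ∀ i, √(c i) ≤ √(a i) * √(b i) := fun i =>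
    (Real.sqrt_le_sqrt (hc i)).trans_eq (Real.sqrt_mul (ha i) _)
  have hc_sum := hsum.of_nonneg_of_le (fun i => Real.sqrt_nonneg _) hcab
  exact ⟨hc_sum, (hc_sum.tsum_le_tsum hcab hsum).trans hle⟩

theorem stmt6_general (d : ℕ) (σ : ℝ) (hσ : (d : ℝ) / 2 < σ)
    (ψ : EuclideanSpace ℝ (Fin d) → ℂ)
    (hint : Integrable (fun s : EuclideanSpace ℝ (Fin d) => (1 + ‖s‖ ^ 2) ^ σ * ‖ψ s‖ ^ 2)) :
    Summable (fun m : Fin d → ℤ =>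
      sSup ((fun s : EuclideanSpace ℝ (Fin d) => (1 + ‖s‖ ^ 2) ^ (-σ)) ''
        {s : EuclideanSpace ℝ (Fin d) | ∀ i, (m i : ℝ) ≤ s i ∧ s i < m i + 1})) ∧
    ∑' m : Fin d → ℤ,
        Real.sqrt (∫ s in {s : EuclideanSpace ℝ (Fin d) | ∀ i, (m i : ℝ) ≤ s i ∧ s i < m i + 1},
          ‖ψ s‖ ^ 2) ≤
      Real.sqrt (∑' m : Fin d → ℤ,
          sSup ((fun s : EuclideanSpace ℝ (Fin d) => (1 + ‖s‖ ^ 2) ^ (-σ)) ''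
            {s : EuclideanSpace ℝ (Fin d) | ∀ i, (m i : ℝ) ≤ s i ∧ s i < m i + 1})) *
        Real.sqrt (∫ s : EuclideanSpace ℝ (Fin d), (1 + ‖s‖ ^ 2) ^ σ * ‖ψ s‖ ^ 2) := by
  have hσ0 : 0 ≤ σ := le_trans (by positivity) hσ.le
  have hA : Summable fun m : Fin d → ℤ =>
      sSup ((fun s : EuclideanSpace ℝ (Fin d) => (1 + ‖s‖ ^ 2) ^ (-σ)) '' unitCube m) :=
    summable_sSup_rpow_neg_unitCube (by simpa using hσ)
  have hb := hasSum_setIntegral_unitCube hint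
  refine ⟨hA, ?_⟩
  rw [← hb.tsum_eq]
  exact (summable_and_tsum_sqrt_le_of_le_mul
    (fun m => Real.sSup_nonneg (forall_mem_image.mpr fun s _ => by positivity))
    (fun m => setIntegral_nonneg (measurableSet_unitCube m) fun s _ => by positivity) hA hb.summable
    (fun m => setIntegral_norm_sq_le_sSup_mul (measurableSet_unitCube m) hσ0 hint.integrableOn)).2

theorem stmt6 (d : ℕ) (hd : 1 ≤ d) (σ : ℝ) (hσ : (d : ℝ) / 2 < σ)
    (ψ : EuclideanSpace ℝ (Fin d) → ℂ) (hψ : Measurable ψ)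
    (hint : Integrable (fun s : EuclideanSpace ℝ (Fin d) => (1 + ‖s‖ ^ 2) ^ σ * ‖ψ s‖ ^ 2)) :
    Summable (fun m : Fin d → ℤ =>
      sSup ((fun s : EuclideanSpace ℝ (Fin d) => (1 + ‖s‖ ^ 2) ^ (-σ)) ''
        {s : EuclideanSpace ℝ (Fin d) | ∀ i, (m i : ℝ) ≤ s i ∧ s i < m i + 1})) ∧
    ∑' m : Fin d → ℤ,
        Real.sqrt (∫ s in {s : EuclideanSpace ℝ (Fin d) | ∀ i, (m i : ℝ) ≤ s i ∧ s i < m i + 1},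
          ‖ψ s‖ ^ 2) ≤
      Real.sqrt (∑' m : Fin d → ℤ,
          sSup ((fun s : EuclideanSpace ℝ (Fin d) => (1 + ‖s‖ ^ 2) ^ (-σ)) ''
            {s : EuclideanSpace ℝ (Fin d) | ∀ i, (m i : ℝ) ≤ s i ∧ s i < m i + 1})) *
        Real.sqrt (∫ s : EuclideanSpace ℝ (Fin d), (1 + ‖s‖ ^ 2) ^ σ * ‖ψ s‖ ^ 2) :=
  stmt6_general d σ hσ ψ hint
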